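/- In any school-choice instance, any matching that is stable with respect to the joint-seat-allocation choice functions {C^JSA_c : c ∈ C} (in particular the student-optimal stable matching μ^JSA) admits no in-group blocking pairs. -/

import Mathlib

/-!
Common formalization of school-choice instances with reserved seats
(minority reserve, joint seat allocation, discovery program).

Conventions:
* `prio c s` is the priority rank of student `s` at school `c`
  (smaller value = higher priority); injectivity encodes a strict priority order.
* `pref s o` is the preference rank of outcome `o : Option C` for student `s`
  (smaller value = more preferred); `none` denotes being unmatched, and a school
  `c` is acceptable to `s` iff `pref s (some c) < pref s none`.
-/

open Finset

structure SchoolChoice (S C : Type*) [Fintype S] [DecidableEq S] [Fintype C] [DecidableEq C] where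
  /-- the set of disadvantaged (minority) students; the rest are advantaged -/
  dis : Finset S
  /-- preference rank of each outcome (school or `none` = unmatched) for each student -/
  pref : S → Option C → ℕ
  pref_inj : ∀ s, Function.Injective (pref s)
  /-- priority rank of each student at each school (lower = higher priority) -/
  prio : C → S → ℕ
  prio_inj : ∀ c, Function.Injective (prio c)
  /-- quota of each school -/
  q : C → ℕ
  /-- reservation quota of each school -/
  qR : C → ℕ
  qR_le : ∀ c, qR c ≤ q c

namespace SchoolChoice

variable {S C : Type*} [Fintype S] [DecidableEq S] [Fintype C] [DecidableEq C]

/-- `max(T, >_c, k)`: the `min(k, |T|)` highest-priority students of `T` at school `c`. -/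
def maxSet (I : SchoolChoice S C) (c : C) (T : Finset S) (k : ℕ) : Finset S :=
  T.filter fun s => (T.filter fun t => I.prio c t < I.prio c s).card < k

/-- baseline choice function `C^BASE_c` -/
def CBASE (I : SchoolChoice S C) (c : C) (T : Finset S) : Finset S :=
  I.maxSet c T (I.q c)

/-- `S1^R` of the minority-reserve choice function -/
def mrRes (I : SchoolChoice S C) (c : C) (T : Finset S) : Finset S :=
  I.maxSet c (T ∩ I.dis) (I.qR c)

/-- minority-reserve choice function `C^MR_c` -/
def CMR (I : SchoolChoice S C) (c : C) (T : Finset S) : Finset S :=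
  I.mrRes c T ∪ I.maxSet c (T \ I.mrRes c T) (I.q c - (I.mrRes c T).card)

/-- `S1^G` of the joint-seat-allocation choice function -/
def jsaGen (I : SchoolChoice S C) (c : C) (T : Finset S) : Finset S :=
  I.maxSet c T (I.q c - I.qR c)

/-- `S1^R` of the joint-seat-allocation choice function -/
def jsaRes (I : SchoolChoice S C) (c : C) (T : Finset S) : Finset S :=
  I.maxSet c ((T ∩ I.dis) \ I.jsaGen c T) (I.qR c)

/-- joint-seat-allocation choice function `C^JSA_c` -/
def CJSA (I : SchoolChoice S C) (c : C) (T : Finset S) : Finset S :=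
  I.jsaGen c T ∪ I.jsaRes c T ∪
    I.maxSet c (T \ (I.jsaGen c T ∪ I.jsaRes c T))
      (I.q c - (I.jsaGen c T ∪ I.jsaRes c T).card)

/-- school `c` is acceptable to student `s` -/
def acceptable (I : SchoolChoice S C) (s : S) (c : C) : Prop :=
  I.pref s (some c) < I.pref s none

/-- `μ(c)`: the set of students assigned to school `c` by `μ` -/
def assigned (I : SchoolChoice S C) (μ : S → Option C) (c : C) : Finset S :=
  Finset.univ.filter fun s => μ s = some c

/-- `μ` is a matching: students are assigned only acceptable schools, quotas respected -/
def IsMatching (I : SchoolChoice S C) (μ : S → Option C) : Prop :=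
  (∀ s c, μ s = some c → I.acceptable s c) ∧ ∀ c, (I.assigned μ c).card ≤ I.q c

/-- `μ` is stable w.r.t. the choice functions `Ch`: it is a matching and no pair
`(s, c)` with `c` acceptable to `s` satisfies `c >_s μ(s)` and `s ∈ Ch c (μ(c) ∪ {s})`. -/
def IsStable (I : SchoolChoice S C) (Ch : C → Finset S → Finset S) (μ : S → Option C) : Prop :=
  I.IsMatching μ ∧
    ∀ s c, I.acceptable s c → I.pref s (some c) < I.pref s (μ s) →
      s ∉ Ch c (insert s (I.assigned μ c))

/-- `μ` is the student-optimal stable matching w.r.t. `Ch`: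
stable and weakly preferred by every student to every stable matching. -/
def IsOptStable (I : SchoolChoice S C) (Ch : C → Finset S → Finset S) (μ : S → Option C) :
    Prop :=
  I.IsStable Ch μ ∧ ∀ μ', I.IsStable Ch μ' → ∀ s, I.pref s (μ s) ≤ I.pref s (μ' s)

/-! Restricted (sub)instances, used by the three-stage discovery program: only students
in `A` participate and school `c` has quota `q' c`, with baseline (responsive) choice
functions. -/

def IsMatchingOn (I : SchoolChoice S C) (A : Finset S) (q' : C → ℕ) (μ : S → Option C) :
    Prop :=
  (∀ s, s ∉ A → μ s = none) ∧
    (∀ s c, μ s = some c → I.acceptable s c) ∧ ∀ c, (I.assigned μ c).card ≤ q' c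

def IsStableOn (I : SchoolChoice S C) (A : Finset S) (q' : C → ℕ) (μ : S → Option C) : Prop :=
  I.IsMatchingOn A q' μ ∧
    ∀ s ∈ A, ∀ c : C, I.acceptable s c → I.pref s (some c) < I.pref s (μ s) →
      s ∉ I.maxSet c (insert s (I.assigned μ c)) (q' c)

def IsOptStableOn (I : SchoolChoice S C) (A : Finset S) (q' : C → ℕ) (μ : S → Option C) :
    Prop :=
  I.IsStableOn A q' μ ∧
    ∀ μ', I.IsStableOn A q' μ' → ∀ s ∈ A, I.pref s (μ s) ≤ I.pref s (μ' s)

/-- `μ` is the discovery-program matching: the union of the three stage matchings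
`μ1` (general seats, all students), `μ2` (reserved seats, unmatched disadvantaged
students), `μ3` (vacant reserved seats, unmatched advantaged students). -/
def IsDisc (I : SchoolChoice S C) (μ : S → Option C) : Prop :=
  ∃ μ1 μ2 μ3 : S → Option C,
    I.IsOptStableOn Finset.univ (fun c => I.q c - I.qR c) μ1 ∧
    I.IsOptStableOn (I.dis.filter fun s => μ1 s = none) I.qR μ2 ∧
    I.IsOptStableOn ((Finset.univ \ I.dis).filter fun s => μ1 s = none)
      (fun c => I.qR c - (I.assigned μ2 c).card) μ3 ∧
    ∀ s, μ s = Option.elim (μ1 s) (Option.elim (μ2 s) (μ3 s) some) some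

/-- `(s, c)` is a blocking pair of `μ` for disadvantaged students -/
def BlockDis (I : SchoolChoice S C) (μ : S → Option C) (s : S) (c : C) : Prop :=
  s ∈ I.dis ∧ I.acceptable s c ∧ I.pref s (some c) < I.pref s (μ s) ∧
    ∃ s' ∈ I.assigned μ c, s' ∈ I.dis ∧ I.prio c s < I.prio c s'

/-- `(s, c)` is a blocking pair of `μ` for advantaged students -/
def BlockAdv (I : SchoolChoice S C) (μ : S → Option C) (s : S) (c : C) : Prop :=
  s ∉ I.dis ∧ I.acceptable s c ∧ I.pref s (some c) < I.pref s (μ s) ∧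
    ∃ s' ∈ I.assigned μ c, s' ∉ I.dis ∧ I.prio c s < I.prio c s'

/-- `(s, c)` is an in-group blocking pair of `μ` -/
def InGroupBlock (I : SchoolChoice S C) (μ : S → Option C) (s : S) (c : C) : Prop :=
  I.BlockDis μ s c ∨ I.BlockAdv μ s c

/-- all schools share a common priority order over the students -/
def CommonPriority (I : SchoolChoice S C) : Prop :=
  ∀ c c' : C, ∀ t u : S, I.prio c t < I.prio c u ↔ I.prio c' t < I.prio c' u

/-- the reservation quotas are a smart reserve w.r.t. the baseline matching `μBase` -/
def SmartReserve (I : SchoolChoice S C) (μBase : S → Option C) : Prop :=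
  ∀ c, (I.assigned μBase c ∩ I.dis).card ≤ I.qR c

end SchoolChoice

/-!
Each of the three stages of `C^JSA_c` selects an upper set of its pool with respect to `>_c`, and
the reserved stage draws only on disadvantaged students. So whenever `C^JSA_c` chooses a student
`s'`, it also chooses every `s >_c s'` that is disadvantaged if `s'` is. If `(s, c)` were an
in-group blocking pair with witness `s' ∈ μ(c)`, stability would make `C^JSA_c` reject `s` from
`μ(c) ∪ {s}`, hence reject `s'` as well. But `C^JSA_c` rejects two students only from a pool
exceeding `q_c` by at least two, while `μ(c) ∪ {s}` exceeds `q_c` by at most one.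
-/

namespace SchoolChoice

variable {S C : Type*} [Fintype S] [DecidableEq S] [Fintype C] [DecidableEq C]
  (I : SchoolChoice S C) {c : C} {T : Finset S} {k : ℕ} {s s' : S}

lemma maxSet_subset (c : C) (T : Finset S) (k : ℕ) : I.maxSet c T k ⊆ T :=
  filter_subset _ _

lemma mem_maxSet_of_prio_lt (hs : s ∈ T) (hs' : s' ∈ I.maxSet c T k)
    (h : I.prio c s < I.prio c s') : s ∈ I.maxSet c T k := by
  simp only [maxSet, mem_filter] at hs' ⊢
  refine ⟨hs, lt_of_le_of_lt (card_le_card fun t ht => ?_) hs'.2⟩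
  simp only [mem_filter] at ht ⊢
  exact ⟨ht.1, ht.2.trans h⟩

lemma card_maxSet_le (c : C) (T : Finset S) (k : ℕ) : (I.maxSet c T k).card ≤ k := by
  obtain hempty | hne := (I.maxSet c T k).eq_empty_or_nonempty
  · simp [hempty]
  obtain ⟨x, hx, hmax⟩ := exists_max_image _ (I.prio c) hne
  have hcount : (I.maxSet c T k).erase x ⊆ T.filter fun t => I.prio c t < I.prio c x := by
    intro y hy
    obtain ⟨hyx, hy⟩ := mem_erase.1 hy
    exact mem_filter.2 ⟨I.maxSet_subset c T k hy,
      (hmax y hy).lt_of_ne fun h => hyx (I.prio_inj c h)⟩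
  have hx_lt : (T.filter fun t => I.prio c t < I.prio c x).card < k := (mem_filter.1 hx).2
  have := card_le_card hcount
  rw [card_erase_of_mem hx] at this
  omega

lemma add_two_le_card_of_notMem_maxSet (hs : s ∈ T) (hs' : s' ∈ T)
    (hrej : s ∉ I.maxSet c T k) (h : I.prio c s < I.prio c s') : k + 2 ≤ T.card := by
  set above := T.filter fun t => I.prio c t < I.prio c s
  have hk : k ≤ above.card := by
    simpa only [maxSet, mem_filter, hs, true_and, not_lt] using hrej
  have hs'_above : s' ∉ above := fun h' => (mem_filter.1 h').2.not_gt h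
  have hs_above : s ∉ insert s' above := by
    rw [mem_insert, not_or]
    exact ⟨fun hss' => h.ne (congrArg _ hss'), fun h' => lt_irrefl _ (mem_filter.1 h').2⟩
  calc k + 2 ≤ above.card + 2 := by omega
    _ = (insert s (insert s' above)).card := by
      rw [card_insert_of_notMem hs_above, card_insert_of_notMem hs'_above]
    _ ≤ T.card := card_le_card (insert_subset hs (insert_subset hs' (filter_subset _ _)))

lemma jsaGen_union_jsaRes_subset (c : C) (T : Finset S) : I.jsaGen c T ∪ I.jsaRes c T ⊆ T :=
  union_subset (I.maxSet_subset _ _ _)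
    ((I.maxSet_subset _ _ _).trans (sdiff_subset.trans inter_subset_left))

lemma card_jsaGen_union_jsaRes_le (c : C) (T : Finset S) :
    (I.jsaGen c T ∪ I.jsaRes c T).card ≤ I.q c := by
  have hG : (I.jsaGen c T).card ≤ I.q c - I.qR c := I.card_maxSet_le _ _ _
  have hR : (I.jsaRes c T).card ≤ I.qR c := I.card_maxSet_le _ _ _
  have := I.qR_le c
  have := card_union_le (I.jsaGen c T) (I.jsaRes c T)
  omega

lemma mem_CJSA_of_prio_lt (hs : s ∈ T) (hs' : s' ∈ I.CJSA c T)
    (hdis : s' ∈ I.dis → s ∈ I.dis) (h : I.prio c s < I.prio c s') : s ∈ I.CJSA c T := by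
  by_contra hrej
  simp only [CJSA, mem_union, not_or] at hs' hrej
  obtain ⟨⟨hrejG, hrejR⟩, hrejRest⟩ := hrej
  rcases hs' with (hG | hR) | hRest
  · exact hrejG (I.mem_maxSet_of_prio_lt hs hG h)
  · have hs'_pool := I.maxSet_subset _ _ _ hR
    simp only [mem_sdiff, mem_inter] at hs'_pool
    exact hrejR (I.mem_maxSet_of_prio_lt
      (mem_sdiff.2 ⟨mem_inter.2 ⟨hs, hdis hs'_pool.1.2⟩, hrejG⟩) hR h)
  · exact hrejRest (I.mem_maxSet_of_prio_lt
      (mem_sdiff.2 ⟨hs, fun hU => (mem_union.1 hU).elim hrejG hrejR⟩) hRest h)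

lemma add_two_le_card_of_notMem_CJSA (hs : s ∈ T) (hs' : s' ∈ T)
    (hrej : s ∉ I.CJSA c T) (hrej' : s' ∉ I.CJSA c T) (h : I.prio c s < I.prio c s') :
    I.q c + 2 ≤ T.card := by
  set U := I.jsaGen c T ∪ I.jsaRes c T
  have hpool : ∀ {t}, t ∈ T → t ∉ I.CJSA c T → t ∈ T \ U := fun ht hrej =>
    mem_sdiff.2 ⟨ht, fun hU => hrej (mem_union_left _ hU)⟩
  have hrest : s ∉ I.maxSet c (T \ U) (I.q c - U.card) := fun h' => hrej (mem_union_right _ h')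
  have hcard := I.add_two_le_card_of_notMem_maxSet (hpool hs hrej) (hpool hs' hrej') hrest h
  have hUq : U.card ≤ I.q c := I.card_jsaGen_union_jsaRes_le c T
  have hUT : U ⊆ T := I.jsaGen_union_jsaRes_subset c T
  rw [card_sdiff_of_subset hUT] at hcard
  have := card_le_card hUT
  omega

variable {I} {μ : S → Option C}

lemma IsStable.not_prio_lt_of_mem_assigned (hμ : I.IsStable I.CJSA μ) (hacc : I.acceptable s c)
    (hpref : I.pref s (some c) < I.pref s (μ s)) (hs' : s' ∈ I.assigned μ c)
    (hdis : s' ∈ I.dis → s ∈ I.dis) : ¬ I.prio c s < I.prio c s' := by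
  intro h
  set T := insert s (I.assigned μ c)
  have hrej : s ∉ I.CJSA c T := hμ.2 s c hacc hpref
  have hrej' : s' ∉ I.CJSA c T := fun h' =>
    hrej (I.mem_CJSA_of_prio_lt (mem_insert_self _ _) h' hdis h)
  have hT : T.card ≤ I.q c + 1 := (card_insert_le _ _).trans (Nat.add_le_add_right (hμ.1.2 c) 1)
  have : I.q c + 2 ≤ T.card :=
    I.add_two_le_card_of_notMem_CJSA (mem_insert_self _ _) (mem_insert_of_mem hs') hrej hrej' h
  omega

end SchoolChoice

/-- any matching stable w.r.t. the joint-seat-allocation choice functions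
admits no in-group blocking pairs. -/
theorem JSA_no_ingroup_blocking {S C : Type*} [Fintype S] [DecidableEq S] [Fintype C] [DecidableEq C]
    (I : SchoolChoice S C) (μ : S → Option C)
    (hstable : I.IsStable I.CJSA μ) (s : S) (c : C) :
    ¬ I.InGroupBlock μ s c := by
  rintro (⟨hs, hacc, hpref, s', hs', -, h⟩ | ⟨-, hacc, hpref, s', hs', hs'_adv, h⟩)
  · exact hstable.not_prio_lt_of_mem_assigned hacc hpref hs' (fun _ => hs) h
  · exact hstable.not_prio_lt_of_mem_assigned hacc hpref hs' (absurd · hs'_adv) h
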